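/- arXiv:2406.14332 — 4 statements merged into one kernel-verified Lean document; each statement's English description precedes it below -/
import Mathlib

section
/- Let D be a digraph, T a directed trail from u₁ to u_h in D, and x a vertex of D. If D contains no directed trail from u₁ to u_h with vertex set V(T) ∪ {x}, then the number of arcs between x and vertices of T (counting both directions) is at most |V(T)|. -/
/-- A directed walk: consecutive vertices are joined by arcs. -/
def IsDiwalk {V : Type*} (A : V → V → Prop) : List V → Prop
  | [] => True
  | [_] => True
  | a :: b :: l => A a b ∧ IsDiwalk A (b :: l)

/-- The list of arcs traversed by a walk given as a vertex list. -/
def arcList {V : Type*} (l : List V) : List (V × V) := l.zip l.tail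

/-- A directed trail: a directed walk with no repeated arcs. -/
def IsDitrail {V : Type*} (A : V → V → Prop) (l : List V) : Prop :=
  IsDiwalk A l ∧ (arcList l).Nodup

/-- A closed directed trail: a directed trail whose first and last vertices coincide. -/
def IsClosedDitrail {V : Type*} (A : V → V → Prop) (l : List V) : Prop :=
  IsDitrail A l ∧ l.head? = l.getLast?

/-- A directed path from `u` to `v` (no repeated vertices). -/
def IsDipathFrom {V : Type*} (A : V → V → Prop) (u v : V) (l : List V) : Prop :=
  IsDiwalk A l ∧ l.Nodup ∧ l.head? = some u ∧ l.getLast? = some v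

/-- Reachability by a directed path. -/
def DiReach {V : Type*} (A : V → V → Prop) (u v : V) : Prop :=
  ∃ l, IsDipathFrom A u v l

/-! If `x ∉ V(T)` has more than `|V(T)|` arcs to and from `V(T)`, then by pigeonhole some
`t ∈ V(T)` satisfies both `t → x` and `x → t`; splicing the detour `t x t` into `T` at an
occurrence of `t` uses two new arcs, both incident with `x`, so it yields a ditrail with the
same ends and vertex set `V(T) ∪ {x}`. If `x ∈ V(T)`, then `T` itself is such a ditrail. -/

theorem Set.inter_nonempty_of_ncard_lt_ncard_add_ncard {α : Type*} {s t u : Set α}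
    (hs : s.Finite) (hts : t ⊆ s) (hus : u ⊆ s) (h : s.ncard < t.ncard + u.ncard) :
    (t ∩ u).Nonempty := by
  rw [Set.nonempty_iff_ne_empty]
  intro hempty
  have hunion := Set.ncard_union_add_ncard_inter t u (hs.subset hts) (hs.subset hus)
  have hle : (t ∪ u).ncard ≤ s.ncard := Set.ncard_le_ncard (Set.union_subset hts hus) hs
  rw [hempty, Set.ncard_empty] at hunion
  omega

section Ditrails

variable {V : Type*}

theorem arcList_cons_cons (a b : V) (l : List V) :
    arcList (a :: b :: l) = (a, b) :: arcList (b :: l) := rfl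

theorem isDiwalk_iff_forall_mem_arcList (A : V → V → Prop) (l : List V) :
    IsDiwalk A l ↔ ∀ p ∈ arcList l, A p.1 p.2 := by
  induction l with
  | nil => simp [IsDiwalk, arcList]
  | cons a l ih =>
    cases l with
    | nil => simp [IsDiwalk, arcList]
    | cons b l => simp [IsDiwalk, ih, arcList_cons_cons]

theorem mem_of_mem_arcList {l : List V} {p : V × V} (h : p ∈ arcList l) :
    p.1 ∈ l ∧ p.2 ∈ l :=
  have ⟨h₁, h₂⟩ := List.of_mem_zip h
  ⟨h₁, List.mem_of_mem_tail h₂⟩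

theorem arcList_append_cons (L : List V) (m : V) (M : List V) :
    arcList (L ++ m :: M) = arcList (L ++ [m]) ++ arcList (m :: M) := by
  induction L with
  | nil => simp [arcList]
  | cons a L ih =>
    cases L with
    | nil => simp [arcList]
    | cons b L => simp only [List.cons_append, arcList_cons_cons] at *; rw [ih]

theorem arcList_insert_detour (L : List V) (t x : V) (R : List V) :
    arcList (L ++ t :: x :: t :: R) =
      arcList (L ++ [t]) ++ (t, x) :: (x, t) :: arcList (t :: R) := by
  rw [arcList_append_cons, arcList_cons_cons, arcList_cons_cons]

theorem IsDitrail.insert_detour {A : V → V → Prop} {L R : List V} {t x : V}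
    (hT : IsDitrail A (L ++ t :: R)) (hx : x ∉ L ++ t :: R) (htx : A t x) (hxt : A x t) :
    IsDitrail A (L ++ t :: x :: t :: R) := by
  obtain ⟨hwalk, hnodup⟩ := hT
  rw [isDiwalk_iff_forall_mem_arcList, arcList_append_cons] at hwalk
  rw [arcList_append_cons, List.nodup_append] at hnodup
  obtain ⟨hnodupL, hnodupR, hdisj⟩ := hnodup
  have hxL : x ∉ L ++ [t] := fun h => hx (by simp_all)
  have hxR : x ∉ t :: R := fun h => hx (by simp_all)
  refine ⟨?_, ?_⟩
  · rw [isDiwalk_iff_forall_mem_arcList, arcList_insert_detour]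
    intro p hp
    simp only [List.mem_append, List.mem_cons] at hp
    rcases hp with hp | rfl | rfl | hp
    exacts [hwalk p (by simp [hp]), htx, hxt, hwalk p (by simp [hp])]
  · rw [arcList_insert_detour, List.nodup_append]
    refine ⟨hnodupL, .cons ?_ (.cons ?_ hnodupR), ?_⟩
    · simp only [List.mem_cons, Prod.mk.injEq, not_or, not_and]
      exact ⟨fun htx' => absurd (htx' ▸ List.mem_cons_self) hxR,
        fun hp => hxR (mem_of_mem_arcList hp).2⟩
    · exact fun hp => hxR (mem_of_mem_arcList hp).1
    · rintro p hpL q hq rfl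
      simp only [List.mem_cons] at hq
      rcases hq with rfl | rfl | hq
      exacts [hxL (mem_of_mem_arcList hpL).2, hxL (mem_of_mem_arcList hpL).1,
        hdisj p hpL p hq rfl]

theorem head?_insert_detour (L : List V) (t x : V) (R : List V) :
    (L ++ t :: x :: t :: R).head? = (L ++ t :: R).head? := by
  cases L <;> rfl

theorem getLast?_insert_detour (L : List V) (t x : V) (R : List V) :
    (L ++ t :: x :: t :: R).getLast? = (L ++ t :: R).getLast? := by
  simp [List.getLast?_append]

theorem IsDitrail.exists_insert {A : V → V → Prop} {T : List V} {t x : V}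
    (hT : IsDitrail A T) (ht : t ∈ T) (hx : x ∉ T) (htx : A t x) (hxt : A x t) :
    ∃ T' : List V, IsDitrail A T' ∧ T'.head? = T.head? ∧ T'.getLast? = T.getLast? ∧
      {v | v ∈ T'} = {v | v ∈ T} ∪ {x} := by
  obtain ⟨L, R, rfl⟩ := List.append_of_mem ht
  refine ⟨L ++ t :: x :: t :: R, hT.insert_detour hx htx hxt, head?_insert_detour L t x R,
    getLast?_insert_detour L t x R, ?_⟩
  ext v
  simp only [Set.mem_ofPred_eq, Set.mem_union, Set.mem_singleton_iff, List.mem_append,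
    List.mem_cons]
  tauto

end Ditrails

theorem stmt_0_general {V : Type*} (A : V → V → Prop)
    (T : List V) (u₁ uh x : V)
    (hT : IsDitrail A T) (hhead : T.head? = some u₁) (hlast : T.getLast? = some uh)
    (hno : ¬ ∃ T' : List V, IsDitrail A T' ∧ T'.head? = some u₁ ∧
      T'.getLast? = some uh ∧ {v | v ∈ T'} = {v | v ∈ T} ∪ {x}) :
    {t | t ∈ T ∧ A x t}.ncard + {t | t ∈ T ∧ A t x}.ncard ≤ {v | v ∈ T}.ncard := by
  by_contra! hlt
  have hxT : x ∉ T := fun hx =>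
    hno ⟨T, hT, hhead, hlast, (Set.union_eq_left.2 (Set.singleton_subset_iff (s := {v | v ∈ T}).2 hx)).symm⟩
  obtain ⟨t, ⟨htT, hxt⟩, -, htx⟩ :=
    Set.inter_nonempty_of_ncard_lt_ncard_add_ncard (List.finite_toSet T)
      (fun _ h => h.1) (fun _ h => h.1) hlt
  obtain ⟨T', hT', hhead', hlast', hverts⟩ := hT.exists_insert htT hxT htx hxt
  exact hno ⟨T', hT', hhead' ▸ hhead, hlast' ▸ hlast, hverts⟩

/-- if `D` has no `(u₁,u_h)`-ditrail with vertex set `V(T) ∪ {x}`,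
then the number of arcs between `x` and `V(T)` (both directions) is at most `|V(T)|`. -/
theorem stmt_0 {V : Type*} [Fintype V] (A : V → V → Prop) (hirr : ∀ v, ¬ A v v)
    (T : List V) (u₁ uh x : V)
    (hT : IsDitrail A T) (hhead : T.head? = some u₁) (hlast : T.getLast? = some uh)
    (hno : ¬ ∃ T' : List V, IsDitrail A T' ∧ T'.head? = some u₁ ∧
      T'.getLast? = some uh ∧ {v | v ∈ T'} = {v | v ∈ T} ∪ {x}) :
    {t | t ∈ T ∧ A x t}.ncard + {t | t ∈ T ∧ A t x}.ncard ≤ {v | v ∈ T}.ncard :=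
  stmt_0_general A T u₁ uh x hT hhead hlast hno
end

section
/- Let G be a graph and M a matching in G with |M| = m > 0. Suppose X = V(G) − V(M) satisfies |X| ≥ 2, and every vertex x ∈ X has degree d(x) ≥ 2m − 1. If some vertex x' ∈ X has d(x') ≥ 2m + 1, then M is not a maximum matching of G. -/
/-!
A matching with `m` edges covers at most `2m` vertices, so an uncovered vertex of degree at least
`2m + 1` has an uncovered neighbour, and the edge joining them augments the matching.
-/

lemma Sym2.ncard_coe_le_two {V : Type*} (e : Sym2 V) : (e : Set V).ncard ≤ 2 := by
  induction e with
  | h u v =>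
    rw [Sym2.coe_mk]
    exact (Set.ncard_insert_le u {v}).trans (by rw [Set.ncard_singleton])

namespace SimpleGraph

variable {V : Type*} {G : SimpleGraph V}

lemma exists_adj_notMem_of_ncard_lt_degree [Fintype V] [DecidableRel G.Adj] {s : Set V}
    {x : V} (hs : s.ncard < G.degree x) : ∃ y, G.Adj x y ∧ y ∉ s := by
  classical
  by_contra! h
  have hsub : G.neighborFinset x ⊆ s.toFinset := fun y hy ↦
    Set.mem_toFinset.mpr (h y ((G.mem_neighborFinset x y).mp hy))
  have := Finset.card_le_card hsub
  rw [card_neighborFinset_eq_degree, ← Set.ncard_eq_toFinset_card'] at this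
  omega

namespace Subgraph

variable {M : G.Subgraph}

lemma IsMatching.ncard_verts_le [Finite V] (hM : M.IsMatching) :
    M.verts.ncard ≤ 2 * M.edgeSet.ncard := by
  classical
  have hfin : M.edgeSet.Finite := Set.toFinite _
  calc M.verts.ncard = (⋃ e ∈ hfin.toFinset, (e : Set V)).ncard := by
        simp only [hM.verts_eq_biUnion_edgeSet, Set.Finite.mem_toFinset]
    _ ≤ ∑ e ∈ hfin.toFinset, (e : Set V).ncard := Finset.set_ncard_biUnion_le _ _
    _ ≤ ∑ _e ∈ hfin.toFinset, 2 := Finset.sum_le_sum fun e _ ↦ e.ncard_coe_le_two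
    _ = 2 * M.edgeSet.ncard := by
        rw [Finset.sum_const, smul_eq_mul, mul_comm, Set.ncard_eq_toFinset_card _ hfin]

lemma IsMatching.sup_subgraphOfAdj (hM : M.IsMatching) {x y : V} (hxy : G.Adj x y)
    (hx : x ∉ M.verts) (hy : y ∉ M.verts) : (M ⊔ G.subgraphOfAdj hxy).IsMatching := by
  refine hM.sup (.subgraphOfAdj hxy) ?_
  rw [hM.support_eq_verts, support_subgraphOfAdj, Set.disjoint_right]
  rintro a (rfl | rfl) <;> assumption

lemma ncard_edgeSet_sup_subgraphOfAdj [Finite V] {x y : V} (hxy : G.Adj x y)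
    (hx : x ∉ M.verts) : (M ⊔ G.subgraphOfAdj hxy).edgeSet.ncard = M.edgeSet.ncard + 1 := by
  have hdisj : Disjoint M.edgeSet {s(x, y)} :=
    Set.disjoint_singleton_right.mpr fun h ↦ hx (M.edge_vert (Subgraph.mem_edgeSet.mp h))
  rw [edgeSet_sup, edgeSet_subgraphOfAdj, Set.ncard_union_eq hdisj (Set.toFinite _)
    (Set.finite_singleton _), Set.ncard_singleton]

end Subgraph

end SimpleGraph

theorem stmt_3_general {V : Type*} [Fintype V] (G : SimpleGraph V) [DecidableRel G.Adj]
    (M : G.Subgraph) (hM : M.IsMatching) (m : ℕ) (hm : M.edgeSet.ncard = m)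
    (x' : V) (hx' : x' ∈ M.vertsᶜ) (hdx' : 2 * m + 1 ≤ G.degree x') :
    ∃ M' : G.Subgraph, M'.IsMatching ∧ M.edgeSet.ncard < M'.edgeSet.ncard := by
  have hverts : M.verts.ncard < G.degree x' := by
    linarith [hM.ncard_verts_le]
  obtain ⟨y, hxy, hy⟩ := G.exists_adj_notMem_of_ncard_lt_degree hverts
  refine ⟨M ⊔ G.subgraphOfAdj hxy, hM.sup_subgraphOfAdj hxy hx' hy, ?_⟩
  rw [SimpleGraph.Subgraph.ncard_edgeSet_sup_subgraphOfAdj hxy hx']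
  omega

/-- if all `M`-uncovered vertices have degree ≥ 2m-1 and some uncovered
vertex has degree ≥ 2m+1, then `M` is not a maximum matching. -/
theorem stmt_3 {V : Type*} [Fintype V] (G : SimpleGraph V) [DecidableRel G.Adj]
    (M : G.Subgraph) (hM : M.IsMatching) (m : ℕ) (hm : M.edgeSet.ncard = m)
    (hpos : 0 < m) (hX : 2 ≤ (M.vertsᶜ).ncard)
    (hdeg : ∀ x ∈ M.vertsᶜ, 2 * m - 1 ≤ G.degree x)
    (x' : V) (hx' : x' ∈ M.vertsᶜ) (hdx' : 2 * m + 1 ≤ G.degree x') :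
    ∃ M' : G.Subgraph, M'.IsMatching ∧ M.edgeSet.ncard < M'.edgeSet.ncard :=
  stmt_3_general G M hM m hm x' hx' hdx'
end

section
/- Let H be a digraph with maximum matching M of its underlying graph, |M| = m > 0, X the set of M-uncovered vertices, |X| ≥ 3, and δ⁰(H) ≥ m. For each e ∈ M let u(e) be the endpoint of e with no neighbours in X and v(e) the other endpoint. Then the set {u(e) : e ∈ M} is an independent set in the underlying graph, d⁺(u(e)) = d⁻(u(e)) = m for every e ∈ M, and both arcs (u(e), v(e')) and (v(e'), u(e)) exist for all e, e' ∈ M (possibly e = e'). -/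
/-- The underlying graph of a digraph given by its arc relation. -/
def UGraph {V : Type*} (A : V → V → Prop) : SimpleGraph V where
  Adj a b := a ≠ b ∧ (A a b ∨ A b a)
  symm := ⟨fun a b h => ⟨h.1.symm, h.2.symm⟩⟩
  loopless := ⟨fun a h => h.1 rfl⟩

/-!
If `u(e)` and `u(e')` were adjacent, then for two uncovered vertices `x ≠ x'` the path
`x v(e) u(e) u(e') v(e') x'` would be `M`-augmenting, contradicting maximality. So every
neighbour of `u(e)` is covered (it is not in `X`) and is not some `u(e')`, hence lies in
`{v(e') | e' ∈ M}`, a set of at most `m` vertices. Since `d⁺(u(e)), d⁻(u(e)) ≥ m`, both the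
out- and the in-neighbourhood of `u(e)` are exactly this set.
-/

namespace SimpleGraph.Subgraph

variable {V : Type*} {G : SimpleGraph V} {M : G.Subgraph}

theorem IsMatching.ncard_verts_eq_two_mul [Finite V] (hM : M.IsMatching) :
    M.verts.ncard = 2 * M.edgeSet.ncard := by
  classical
  have := Fintype.ofFinite V
  have hfiber : ∀ e : M.edgeSet, (Finset.univ.filter fun v => hM.toEdge v = e).card = 2 := by
    rintro ⟨e, he⟩
    induction e using Sym2.ind with
    | h u w =>
      have hfib : (Finset.univ.filter fun v => hM.toEdge v = ⟨s(u, w), he⟩) =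
          {⟨u, he.fst_mem⟩, ⟨w, he.snd_mem⟩} := by
        apply Finset.coe_injective
        simpa [Set.preimage, Set.ext_iff] using hM.toEdge_preimage_singleton he
      rw [hfib, Finset.card_pair (fun h => he.ne (congrArg Subtype.val h))]
  rw [← Nat.card_coe_set_eq, ← Nat.card_coe_set_eq, Nat.card_eq_fintype_card,
    Nat.card_eq_fintype_card, ← Finset.card_univ,
    Finset.card_eq_sum_card_fiberwise (f := hM.toEdge) (t := Finset.univ) (by simp)]
  simp [hfiber, mul_comm]

theorem IsMatching.deleteVerts (hM : M.IsMatching) {S : Set V}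
    (hS : ∀ ⦃v w⦄, M.Adj v w → v ∈ S → w ∈ S) : (M.deleteVerts S).IsMatching := by
  rintro v ⟨hv, hvS⟩
  obtain ⟨w, hvw, huniq⟩ := hM hv
  exact ⟨w, deleteVerts_adj.2 ⟨hv, hvS, hvw.snd_mem, fun hwS => hvS (hS hvw.symm hwS), hvw⟩,
    fun y hy => huniq y (deleteVerts_adj.1 hy).2.2.2.2⟩

theorem IsMatching.sup_of_disjoint_verts {N : G.Subgraph} (hM : M.IsMatching) (hN : N.IsMatching)
    (hd : Disjoint M.verts N.verts) : (M ⊔ N).IsMatching :=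
  hM.sup hN (by rwa [hM.support_eq_verts, hN.support_eq_verts])

/-- `x b a a' b' x'` is an `M`-augmenting path; the augmented matching covers
`M.verts ∪ {x, x'}`. -/
theorem IsMatching.exists_ncard_edgeSet_eq_add_one [Finite V] (hM : M.IsMatching)
    {a b a' b' x x' : V} (hab : M.Adj a b) (ha'b' : M.Adj a' b') (hba' : b ≠ a')
    (hx : x ∉ M.verts) (hx' : x' ∉ M.verts) (hxx' : x ≠ x')
    (haa' : G.Adj a a') (hbx : G.Adj b x) (hb'x' : G.Adj b' x') :
    ∃ M' : G.Subgraph, M'.IsMatching ∧ M'.edgeSet.ncard = M.edgeSet.ncard + 1 := by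
  have ha := hab.fst_mem
  have hb := hab.snd_mem
  have ha' := ha'b'.fst_mem
  have hb' := ha'b'.snd_mem
  have hab' : a ≠ b' := fun h => hba' (hM.eq_of_adj_right hab.symm (by subst h; exact ha'b'))
  have hbb' : b ≠ b' := fun h => haa'.ne (hM.eq_of_adj_right hab (by subst h; exact ha'b'))
  set N := G.subgraphOfAdj haa' ⊔ G.subgraphOfAdj hbx ⊔ G.subgraphOfAdj hb'x'
  have hNverts : N.verts = {a, a', b, x, b', x'} := by
    simp only [N, verts_sup, subgraphOfAdj_verts]
    grind
  have hN : N.IsMatching :=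
    ((IsMatching.subgraphOfAdj haa').sup_of_disjoint_verts (.subgraphOfAdj hbx)
      (by rw [subgraphOfAdj_verts, subgraphOfAdj_verts, Set.disjoint_left]
          grind [hab.ne, haa'.ne])).sup_of_disjoint_verts (.subgraphOfAdj hb'x')
      (by simp only [verts_sup, subgraphOfAdj_verts, Set.disjoint_left]
          grind [ha'b'.ne])
  have hS : ∀ ⦃v w⦄, M.Adj v w → v ∈ ({a, b, a', b'} : Set V) →
      w ∈ ({a, b, a', b'} : Set V) := by
    rintro v w hvw (rfl | rfl | rfl | rfl)
    · simp [hM.eq_of_adj_left hvw hab]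
    · simp [hM.eq_of_adj_left hvw hab.symm]
    · simp [hM.eq_of_adj_left hvw ha'b']
    · simp [hM.eq_of_adj_left hvw ha'b'.symm]
  have hM' := (hM.deleteVerts hS).sup_of_disjoint_verts hN (by
    rw [deleteVerts_verts, hNverts, Set.disjoint_left]
    grind)
  have hverts : (M.deleteVerts {a, b, a', b'} ⊔ N).verts = insert x (insert x' M.verts) := by
    rw [verts_sup, deleteVerts_verts, hNverts]
    grind
  refine ⟨_, hM', ?_⟩
  have hcard := hM'.ncard_verts_eq_two_mul
  rw [hverts, Set.ncard_insert_of_notMem (by simp [hxx', hx]), Set.ncard_insert_of_notMem hx',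
    hM.ncard_verts_eq_two_mul] at hcard
  omega

theorem IsMatching.mem_image_of_adj {f g : Sym2 V → V} (hM : M.IsMatching)
    (hfg : ∀ e ∈ M.edgeSet, e = s(f e, g e))
    (hind : ∀ e ∈ M.edgeSet, ∀ e' ∈ M.edgeSet, ¬ G.Adj (f e) (f e')) {e : Sym2 V}
    (he : e ∈ M.edgeSet) {w : V} (hw : w ∈ M.verts) (hadj : G.Adj (f e) w) :
    w ∈ g '' M.edgeSet := by
  obtain ⟨p, hp : s(w, p) ∈ M.edgeSet, -⟩ := hM hw
  have hwp : w ∈ s(f s(w, p), g s(w, p)) := hfg _ hp ▸ Sym2.mem_mk_left w p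
  rcases Sym2.mem_iff.1 hwp with hwf | hwg
  · exact absurd (hwf ▸ hadj) (hind e he _ hp)
  · exact ⟨_, hp, hwg.symm⟩

end SimpleGraph.Subgraph

theorem Set.eq_and_ncard_eq_of_subset {α : Type*} {s t : Set α} {m : ℕ} (ht : t.Finite)
    (hst : s ⊆ t) (ht_le : t.ncard ≤ m) (hs : m ≤ s.ncard) : s = t ∧ s.ncard = m :=
  ⟨Set.eq_of_subset_of_ncard_le hst (ht_le.trans hs) ht,
    le_antisymm ((Set.ncard_le_ncard hst ht).trans ht_le) hs⟩

theorem uGraph_adj_of_arc {V : Type*} {A : V → V → Prop} (hirr : ∀ v, ¬ A v v) {a b : V}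
    (h : A a b) : (UGraph A).Adj a b :=
  ⟨fun hab => hirr a (hab ▸ h), .inl h⟩

theorem setOf_arc_eq_of_forall_adj_mem {V : Type*} {A : V → V → Prop} (hirr : ∀ v, ¬ A v v)
    {v : V} {S : Set V} {m : ℕ} (hS : S.Finite) (hSm : S.ncard ≤ m)
    (hdeg : m ≤ {w | A v w}.ncard ∧ m ≤ {w | A w v}.ncard)
    (hnbr : ∀ w, (UGraph A).Adj v w → w ∈ S) :
    {w | A v w} = S ∧ {w | A w v} = S ∧ S.ncard = m := by
  obtain ⟨hout, -⟩ := Set.eq_and_ncard_eq_of_subset hS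
    (fun w hw => hnbr w (uGraph_adj_of_arc hirr hw)) hSm hdeg.1
  obtain ⟨hin, hm⟩ := Set.eq_and_ncard_eq_of_subset hS
    (fun w hw => hnbr w (uGraph_adj_of_arc hirr hw).symm) hSm hdeg.2
  exact ⟨hout, hin, hin ▸ hm⟩

theorem stmt_6_general {V : Type*} [Fintype V] (A : V → V → Prop) (hirr : ∀ v, ¬ A v v)
    (M : (UGraph A).Subgraph) (hM : M.IsMatching)
    (hmax : ∀ M' : (UGraph A).Subgraph, M'.IsMatching →
      M'.edgeSet.ncard ≤ M.edgeSet.ncard)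
    (m : ℕ) (hm : M.edgeSet.ncard = m)
    (hX : 3 ≤ (M.vertsᶜ).ncard)
    (hdel : ∀ v : V, m ≤ {w | A v w}.ncard ∧ m ≤ {w | A w v}.ncard)
    (f g : Sym2 V → V)
    (hfg : ∀ e ∈ M.edgeSet, f e ∈ e ∧ g e ∈ e ∧ f e ≠ g e ∧
      (∀ x ∈ M.vertsᶜ, ¬ A (f e) x ∧ ¬ A x (f e)) ∧
      (∀ x ∈ M.vertsᶜ, A (g e) x ∧ A x (g e))) :
    (∀ e ∈ M.edgeSet, ∀ e' ∈ M.edgeSet, ¬ (UGraph A).Adj (f e) (f e')) ∧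
    (∀ e ∈ M.edgeSet, {w | A (f e) w}.ncard = m ∧ {w | A w (f e)}.ncard = m) ∧
    (∀ e ∈ M.edgeSet, ∀ e' ∈ M.edgeSet, A (f e) (g e') ∧ A (g e') (f e)) := by
  choose hfe hge hne hfX hgX using hfg
  have hM_eq : ∀ e ∈ M.edgeSet, e = s(f e, g e) := fun e he =>
    (Sym2.mem_and_mem_iff (hne e he)).1 ⟨hfe e he, hge e he⟩
  have hadj : ∀ e ∈ M.edgeSet, s(f e, g e) ∈ M.edgeSet := fun e he => hM_eq e he ▸ he
  obtain ⟨x, hx, x', hx', hxx'⟩ : ∃ x ∈ M.vertsᶜ, ∃ x' ∈ M.vertsᶜ, x ≠ x' := by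
    rw [← Set.one_lt_ncard (Set.toFinite _)]
    omega
  have hind : ∀ e ∈ M.edgeSet, ∀ e' ∈ M.edgeSet, ¬ (UGraph A).Adj (f e) (f e') := by
    intro e he e' he' h
    have hgf : g e ≠ f e' := fun h' => (hfX e' he' x hx).1 (h' ▸ (hgX e he x hx).1)
    obtain ⟨M', hM', hcard⟩ := hM.exists_ncard_edgeSet_eq_add_one (hadj e he) (hadj e' he') hgf
      hx hx' hxx' h (uGraph_adj_of_arc hirr (hgX e he x hx).1)
      (uGraph_adj_of_arc hirr (hgX e' he' x' hx').1)
    have := hmax M' hM'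
    omega
  have hnbhd : ∀ e ∈ M.edgeSet, {w | A (f e) w} = g '' M.edgeSet ∧
      {w | A w (f e)} = g '' M.edgeSet ∧ (g '' M.edgeSet).ncard = m := fun e he =>
    setOf_arc_eq_of_forall_adj_mem hirr (Set.toFinite _)
      (hm ▸ Set.ncard_image_le (Set.toFinite _)) (hdel _) fun w hw =>
        hM.mem_image_of_adj hM_eq hind he
          (by_contra fun hwM => hw.2.elim (hfX e he w hwM).1 (hfX e he w hwM).2) hw
  refine ⟨hind, fun e he => ?_, fun e he e' he' => ?_⟩
  · obtain ⟨hout, hin, hcard⟩ := hnbhd e he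
    exact ⟨hout ▸ hcard, hin ▸ hcard⟩
  · obtain ⟨hout, hin, -⟩ := hnbhd e he
    exact ⟨hout.symm.subset ⟨e', he', rfl⟩, hin.symm.subset ⟨e', he', rfl⟩⟩

/-- with `u(e) = f e` the endpoint of `e` without neighbours in `X` and
`v(e) = g e` the other endpoint, `{u(e)}` is independent, `d⁺(u(e)) = d⁻(u(e)) = m`,
and all arcs `(u(e), v(e'))`, `(v(e'), u(e))` exist. -/
theorem stmt_6 {V : Type*} [Fintype V] (A : V → V → Prop) (hirr : ∀ v, ¬ A v v)
    (M : (UGraph A).Subgraph) (hM : M.IsMatching)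
    (hmax : ∀ M' : (UGraph A).Subgraph, M'.IsMatching →
      M'.edgeSet.ncard ≤ M.edgeSet.ncard)
    (m : ℕ) (hm : M.edgeSet.ncard = m) (hpos : 0 < m)
    (hX : 3 ≤ (M.vertsᶜ).ncard)
    (hdel : ∀ v : V, m ≤ {w | A v w}.ncard ∧ m ≤ {w | A w v}.ncard)
    (f g : Sym2 V → V)
    (hfg : ∀ e ∈ M.edgeSet, f e ∈ e ∧ g e ∈ e ∧ f e ≠ g e ∧
      (∀ x ∈ M.vertsᶜ, ¬ A (f e) x ∧ ¬ A x (f e)) ∧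
      (∀ x ∈ M.vertsᶜ, A (g e) x ∧ A x (g e))) :
    (∀ e ∈ M.edgeSet, ∀ e' ∈ M.edgeSet, ¬ (UGraph A).Adj (f e) (f e')) ∧
    (∀ e ∈ M.edgeSet, {w | A (f e) w}.ncard = m ∧ {w | A w (f e)}.ncard = m) ∧
    (∀ e ∈ M.edgeSet, ∀ e' ∈ M.edgeSet, A (f e) (g e') ∧ A (g e') (f e)) :=
  stmt_6_general A hirr M hM hmax m hm hX hdel f g hfg
end

section
/- Let H be a digraph with maximum matching M of its underlying graph, |M| = m > 0, and suppose the uncovered set X = {x, x'} has exactly two vertices, δ⁰(H) ≥ m, and the set M_x = {e ∈ M : some endpoint of e is adjacent to x} satisfies |M_x| = m/2. Then the induced subdigraphs on V(M_x) ∪ {x} and on V(M − M_x) ∪ {x'} are both complete digraphs on m+1 vertices, and there are no arcs between these two vertex sets. -/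
/-!
A maximum matching admits no augmenting path. Hence `x` and `x'` are nonadjacent, every neighbour
of `x` lies in `V(M_x)`, and since `|V(M_x)| = m` the degree bound makes `x` adjacent to all of
`V(M_x)`. Then `x'` has no neighbour `u` in `V(M_x)` (with `uv ∈ M_x`, `x' u v x` would augment),
so in the same way `x'` is adjacent to all of `V(M - M_x)`; an edge `uw` between the two halves
would give the augmenting path `x v u w z x'`. Thus the vertices split into two parts of size
`m + 1` with no edges between them, and a vertex of out-degree at least `m` must send arcs to all
other vertices of its own part.
-/

namespace SimpleGraph

variable {V : Type*} {G : SimpleGraph V}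

def verticesOf (F : Set (Sym2 V)) : Set V := {v | ∃ e ∈ F, v ∈ e}

theorem verticesOf_eq_biUnion (F : Set (Sym2 V)) : verticesOf F = ⋃ e ∈ F, (e : Set V) := by
  ext; simp [verticesOf]

theorem ncard_verticesOf [Finite V] {F : Set (Sym2 V)} (hF : F ⊆ G.edgeSet)
    (hFd : F.PairwiseDisjoint ((↑) : Sym2 V → Set V)) : (verticesOf F).ncard = 2 * F.ncard := by
  rw [verticesOf_eq_biUnion, (Set.toFinite F).ncard_biUnion (fun _ _ => Set.toFinite _) hFd,
    ← finsum_one, mul_finsum_mem]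
  refine finsum_mem_congr rfl fun e he => ?_
  induction e with
  | _ a b => simpa using Set.ncard_pair (G.ne_of_adj (hF he))

namespace Subgraph

def IsMaximumMatching (M : G.Subgraph) : Prop :=
  M.IsMatching ∧ ∀ M' : G.Subgraph, M'.IsMatching → M'.edgeSet.ncard ≤ M.edgeSet.ncard

theorem IsMatching.pairwiseDisjoint_edgeSet {M : G.Subgraph} (hM : M.IsMatching) :
    M.edgeSet.PairwiseDisjoint ((↑) : Sym2 V → Set V) := by
  intro e he f hf hne
  refine Set.disjoint_left.mpr fun v hve hvf => hne ?_
  obtain ⟨a, rfl⟩ := Sym2.mem_iff_exists.mp hve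
  obtain ⟨b, rfl⟩ := Sym2.mem_iff_exists.mp hvf
  rw [hM.eq_of_adj_left (M.mem_edgeSet.mp he) (M.mem_edgeSet.mp hf)]

theorem IsMatching.ncard_verticesOf [Finite V] {M : G.Subgraph} (hM : M.IsMatching)
    {R : Set (Sym2 V)} (hR : R ⊆ M.edgeSet) : (verticesOf R).ncard = 2 * R.ncard :=
  SimpleGraph.ncard_verticesOf (hR.trans M.edgeSet_subset) (hM.pairwiseDisjoint_edgeSet.subset hR)

theorem IsMatching.verts_eq_verticesOf_union {M : G.Subgraph} (hM : M.IsMatching)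
    {R : Set (Sym2 V)} (hR : R ⊆ M.edgeSet) :
    M.verts = verticesOf R ∪ verticesOf (M.edgeSet \ R) := by
  rw [hM.verts_eq_biUnion_edgeSet, verticesOf_eq_biUnion, verticesOf_eq_biUnion,
    ← Set.biUnion_union, Set.union_sdiff_cancel hR]

theorem IsMatching.disjoint_verticesOf_sdiff {M : G.Subgraph} (hM : M.IsMatching)
    {R : Set (Sym2 V)} (hR : R ⊆ M.edgeSet) :
    Disjoint (verticesOf R) (verticesOf (M.edgeSet \ R)) := by
  refine Set.disjoint_left.mpr fun v ⟨e, he, hve⟩ ⟨f, ⟨hf, hfR⟩, hvf⟩ => hfR ?_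
  have : e = f := hM.pairwiseDisjoint_edgeSet.elim (hR he) hf
    (Set.not_disjoint_iff.mpr ⟨v, hve, hvf⟩)
  exact this ▸ he

theorem IsMatching.mem_union_or_mem_union {M : G.Subgraph} (hM : M.IsMatching)
    {R : Set (Sym2 V)} (hR : R ⊆ M.edgeSet) {x x' : V} (hX : M.vertsᶜ = {x, x'}) (v : V) :
    v ∈ verticesOf R ∪ {x} ∨ v ∈ verticesOf (M.edgeSet \ R) ∪ {x'} := by
  by_cases hv : v ∈ M.verts
  · rw [hM.verts_eq_verticesOf_union hR] at hv
    exact hv.imp Or.inl Or.inl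
  · rw [← Set.mem_compl_iff, hX] at hv
    exact hv.imp Or.inr Or.inr

theorem exists_isMatching_edgeSet_eq {F : Set (Sym2 V)} (hF : F ⊆ G.edgeSet)
    (hFd : F.PairwiseDisjoint ((↑) : Sym2 V → Set V)) :
    ∃ M : G.Subgraph, M.IsMatching ∧ M.edgeSet = F := by
  let M : G.Subgraph :=
    { verts := verticesOf F
      Adj := fun a b => s(a, b) ∈ F
      adj_sub := fun h => hF h
      edge_vert := fun {a b} h => ⟨_, h, Sym2.mem_mk_left a b⟩
      symm := ⟨fun a b h => by rwa [Sym2.eq_swap]⟩ }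
  refine ⟨M, fun v hv => ?_, Set.ext fun e => by induction e with | _ a b => rfl⟩
  obtain ⟨e, he, hve⟩ := hv
  obtain ⟨w, rfl⟩ := Sym2.mem_iff_exists.mp hve
  refine ⟨w, he, fun w' hw' => ?_⟩
  have : s(v, w') = s(v, w) :=
    hFd.elim hw' he (Set.not_disjoint_iff.mpr ⟨v, Sym2.mem_mk_left _ _, Sym2.mem_mk_left _ _⟩)
  exact Sym2.congr_right.mp this

-- Replacing the edges `R` of `M` by `F` gives another matching.
theorem IsMaximumMatching.ncard_le_of_exchange [Finite V] {M : G.Subgraph}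
    (hM : M.IsMaximumMatching) {R F : Set (Sym2 V)} (hR : R ⊆ M.edgeSet) (hF : F ⊆ G.edgeSet)
    (hFd : F.PairwiseDisjoint ((↑) : Sym2 V → Set V))
    (hFR : ∀ f ∈ F, ∀ v ∈ f, v ∈ M.verts → ∃ r ∈ R, v ∈ r) : F.ncard ≤ R.ncard := by
  have hkept : ∀ e ∈ M.edgeSet \ R, ∀ f ∈ F, Disjoint (e : Set V) f := by
    rintro e ⟨he, heR⟩ f hf
    refine Set.disjoint_left.mpr fun v hve hvf => ?_
    obtain ⟨r, hr, hvr⟩ := hFR f hf v hvf (M.mem_verts_of_mem_edge he hve)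
    have : e = r := hM.1.pairwiseDisjoint_edgeSet.elim he (hR hr)
      (Set.not_disjoint_iff.mpr ⟨v, hve, hvr⟩)
    exact heR (this ▸ hr)
  have hdisj : Disjoint (M.edgeSet \ R) F := Set.disjoint_left.mpr fun e he hef => by
    obtain ⟨v, hv⟩ : (e : Set V).Nonempty := by induction e with | _ a b => simp
    exact Set.disjoint_left.mp (hkept e he e hef) hv hv
  obtain ⟨M', hM', hM'E⟩ := exists_isMatching_edgeSet_eq (F := (M.edgeSet \ R) ∪ F)
    (Set.union_subset (Set.sdiff_subset.trans M.edgeSet_subset) hF)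
    (Set.pairwiseDisjoint_union.mpr
      ⟨hM.1.pairwiseDisjoint_edgeSet.subset Set.sdiff_subset, hFd,
        fun e he f hf _ => hkept e he f hf⟩)
  have hcard := hM.2 M' hM'
  rw [hM'E, Set.ncard_union_eq hdisj, Set.ncard_sdiff hR] at hcard
  have := Set.ncard_le_ncard hR
  omega

def edgesAdjTo (M : G.Subgraph) (x : V) : Set (Sym2 V) := {e ∈ M.edgeSet | ∃ y ∈ e, G.Adj x y}

theorem edgesAdjTo_subset (M : G.Subgraph) (x : V) : M.edgesAdjTo x ⊆ M.edgeSet :=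
  fun _ he => he.1

variable [Finite V] {M : G.Subgraph} {x x' u v w z : V}

theorem IsMaximumMatching.not_adj_of_notMem_verts (hM : M.IsMaximumMatching)
    (hu : u ∉ M.verts) (hv : v ∉ M.verts) : ¬G.Adj u v := fun huv => by
  have := hM.ncard_le_of_exchange (R := ∅) (F := {s(u, v)}) (Set.empty_subset _)
    (by simpa using huv) (Set.pairwiseDisjoint_singleton _ _) (by simp_all)
  simp at this

-- `x' u v x` would be an augmenting path.
theorem IsMaximumMatching.not_adj_of_adj_of_adj (hM : M.IsMaximumMatching)
    (hx : x ∉ M.verts) (hx' : x' ∉ M.verts) (hxx : x ≠ x') (huv : M.Adj u v)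
    (hxv : G.Adj x v) : ¬G.Adj x' u := fun hx'u => by
  have hu := huv.fst_mem
  have hv := huv.snd_mem
  have huv' := huv.ne
  have hFd : ({s(x', u), s(x, v)} : Set (Sym2 V)).PairwiseDisjoint ((↑) : Sym2 V → Set V) := by
    simp only [Set.pairwiseDisjoint_insert, Set.pairwiseDisjoint_singleton, Sym2.coe_mk,
      Set.disjoint_insert_left, Set.disjoint_singleton_left, Set.mem_singleton_iff, forall_eq,
      SetLike.mem_coe, Sym2.mem_iff]
    grind
  have := hM.ncard_le_of_exchange (R := {s(u, v)}) (F := {s(x', u), s(x, v)})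
    (by simpa using huv) (by simp [Set.insert_subset_iff, hx'u, hxv]) hFd (by
      simp only [Set.mem_insert_iff, Set.mem_singleton_iff, forall_eq_or_imp, forall_eq,
        exists_eq_left, Sym2.mem_iff]
      grind)
  rw [Set.ncard_pair (by rw [Ne, Sym2.eq_iff]; grind), Set.ncard_singleton] at this
  omega

-- `x v u w z x'` would be an augmenting path.
theorem IsMaximumMatching.not_adj_of_adj_of_adj_of_adj (hM : M.IsMaximumMatching)
    (hx : x ∉ M.verts) (hx' : x' ∉ M.verts) (hxx : x ≠ x') (huv : M.Adj u v) (hwz : M.Adj w z)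
    (hne : s(u, v) ≠ s(w, z)) (hxv : G.Adj x v) (hzx' : G.Adj z x') : ¬G.Adj u w := fun huw => by
  have hu := huv.fst_mem
  have hv := huv.snd_mem
  have hw := hwz.fst_mem
  have hz := hwz.snd_mem
  have huv' := huv.ne
  have hwz' := hwz.ne
  have hd := hM.1.pairwiseDisjoint_edgeSet huv hwz hne
  simp only [Function.onFun, Sym2.coe_mk, Set.disjoint_insert_left, Set.disjoint_insert_right,
    Set.disjoint_singleton, Set.mem_insert_iff, Set.mem_singleton_iff, not_or] at hd
  have hFd : ({s(x, v), s(u, w), s(z, x')} : Set (Sym2 V)).PairwiseDisjoint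
      ((↑) : Sym2 V → Set V) := by
    simp only [Set.pairwiseDisjoint_insert, Set.pairwiseDisjoint_singleton, Sym2.coe_mk,
      Set.disjoint_insert_left, Set.disjoint_singleton_left, Set.mem_insert_iff,
      Set.mem_singleton_iff, forall_eq_or_imp, forall_eq, SetLike.mem_coe, Sym2.mem_iff]
    grind
  have := hM.ncard_le_of_exchange (R := {s(u, v), s(w, z)})
    (F := {s(x, v), s(u, w), s(z, x')})
    (by simp [Set.insert_subset_iff, huv, hwz]) (by simp [Set.insert_subset_iff, hxv, huw, hzx'])
    hFd (by
      simp only [Set.mem_insert_iff, Set.mem_singleton_iff, forall_eq_or_imp, forall_eq,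
        exists_eq_or_imp, exists_eq_left, Sym2.mem_iff]
      grind)
  rw [Set.ncard_eq_three.mpr ⟨_, _, _, by rw [Ne, Sym2.eq_iff]; grind,
    by rw [Ne, Sym2.eq_iff]; grind, by rw [Ne, Sym2.eq_iff]; grind, rfl⟩,
    Set.ncard_pair hne] at this
  omega

theorem IsMaximumMatching.neighborSet_subset_verticesOf_edgesAdjTo (hM : M.IsMaximumMatching)
    (hx : x ∉ M.verts) : G.neighborSet x ⊆ verticesOf (M.edgesAdjTo x) := by
  intro w hxw
  have hw : w ∈ M.verts := by
    by_contra hw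
    exact hM.not_adj_of_notMem_verts hx hw hxw
  obtain ⟨y, hwy, -⟩ := hM.1 hw
  exact ⟨s(w, y), ⟨hwy, w, Sym2.mem_mk_left w y, hxw⟩, Sym2.mem_mk_left w y⟩

theorem IsMaximumMatching.not_adj_of_mem_verticesOf_edgesAdjTo (hM : M.IsMaximumMatching)
    (hx : x ∉ M.verts) (hx' : x' ∉ M.verts) (hxx : x ≠ x')
    (hxS : ∀ v ∈ verticesOf (M.edgesAdjTo x), G.Adj x v)
    (hu : u ∈ verticesOf (M.edgesAdjTo x)) : ¬G.Adj x' u := by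
  obtain ⟨e, he, hue⟩ := hu
  obtain ⟨v, rfl⟩ := Sym2.mem_iff_exists.mp hue
  exact hM.not_adj_of_adj_of_adj hx hx' hxx he.1 (hxS v ⟨_, he, Sym2.mem_mk_right u v⟩)

theorem IsMaximumMatching.neighborSet_subset_verticesOf_sdiff_edgesAdjTo
    (hM : M.IsMaximumMatching) (hx : x ∉ M.verts) (hx' : x' ∉ M.verts) (hxx : x ≠ x')
    (hxS : ∀ v ∈ verticesOf (M.edgesAdjTo x), G.Adj x v) :
    G.neighborSet x' ⊆ verticesOf (M.edgeSet \ M.edgesAdjTo x) := by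
  intro w hx'w
  have hw : w ∈ M.verts := by
    by_contra hw
    exact hM.not_adj_of_notMem_verts hx' hw hx'w
  rw [hM.1.verts_eq_verticesOf_union (M.edgesAdjTo_subset x)] at hw
  exact hw.resolve_left fun hwS => hM.not_adj_of_mem_verticesOf_edgesAdjTo hx hx' hxx hxS hwS hx'w

theorem IsMaximumMatching.not_adj_of_mem_verticesOf_of_mem_verticesOf_sdiff
    (hM : M.IsMaximumMatching) (hx : x ∉ M.verts) (hx' : x' ∉ M.verts) (hxx : x ≠ x')
    (hxS : ∀ v ∈ verticesOf (M.edgesAdjTo x), G.Adj x v)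
    (hx'S : ∀ v ∈ verticesOf (M.edgeSet \ M.edgesAdjTo x), G.Adj x' v)
    (hu : u ∈ verticesOf (M.edgesAdjTo x)) (hw : w ∈ verticesOf (M.edgeSet \ M.edgesAdjTo x)) :
    ¬G.Adj u w := by
  obtain ⟨e, he, hue⟩ := hu
  obtain ⟨f, hf, hwf⟩ := hw
  obtain ⟨v, rfl⟩ := Sym2.mem_iff_exists.mp hue
  obtain ⟨z, rfl⟩ := Sym2.mem_iff_exists.mp hwf
  exact hM.not_adj_of_adj_of_adj_of_adj hx hx' hxx he.1 hf.1 (fun h => hf.2 (h ▸ he))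
    (hxS v ⟨_, he, Sym2.mem_mk_right u v⟩) (hx'S z ⟨_, hf, Sym2.mem_mk_right w z⟩).symm

theorem IsMaximumMatching.not_adj_of_two_uncovered (hM : M.IsMaximumMatching)
    (hx : x ∉ M.verts) (hx' : x' ∉ M.verts) (hxx : x ≠ x')
    (hdeg : (verticesOf (M.edgesAdjTo x)).ncard ≤ (G.neighborSet x).ncard)
    (hdeg' : (verticesOf (M.edgeSet \ M.edgesAdjTo x)).ncard ≤ (G.neighborSet x').ncard) :
    ∀ a ∈ verticesOf (M.edgesAdjTo x) ∪ {x},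
      ∀ b ∈ verticesOf (M.edgeSet \ M.edgesAdjTo x) ∪ {x'}, ¬G.Adj a b := by
  have hN := hM.neighborSet_subset_verticesOf_edgesAdjTo hx
  have hxS : ∀ v ∈ verticesOf (M.edgesAdjTo x), G.Adj x v := fun v hv =>
    (Set.eq_of_subset_of_ncard_le hN hdeg).superset hv
  have hN' := hM.neighborSet_subset_verticesOf_sdiff_edgesAdjTo hx hx' hxx hxS
  have hx'S : ∀ v ∈ verticesOf (M.edgeSet \ M.edgesAdjTo x), G.Adj x' v := fun v hv =>
    (Set.eq_of_subset_of_ncard_le hN' hdeg').superset hv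
  rintro a (ha | rfl) b (hb | rfl)
  · exact hM.not_adj_of_mem_verticesOf_of_mem_verticesOf_sdiff hx hx' hxx hxS hx'S ha hb
  · exact fun h => hM.not_adj_of_mem_verticesOf_edgesAdjTo hx hx' hxx hxS ha h.symm
  · exact fun h => Set.disjoint_left.mp
      (hM.1.disjoint_verticesOf_sdiff (M.edgesAdjTo_subset a)) (hN h) hb
  · exact hM.not_adj_of_notMem_verts hx hx'

end Subgraph

end SimpleGraph

namespace UGraph

variable {V : Type*} {A : V → V → Prop}

theorem adj_of_arc (hirr : ∀ v, ¬A v v) {a b : V} (h : A a b) : (UGraph A).Adj a b :=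
  ⟨fun hab => hirr a (hab ▸ h), Or.inl h⟩

theorem ncard_le_ncard_neighborSet [Finite V] (hirr : ∀ v, ¬A v v) (v : V) :
    {w | A v w}.ncard ≤ ((UGraph A).neighborSet v).ncard :=
  Set.ncard_le_ncard fun _ => adj_of_arc hirr

theorem arc_of_mem_of_mem [Finite V] (hirr : ∀ v, ¬A v v) {P Q : Set V} {k : ℕ}
    (hPQ : ∀ v, v ∈ P ∨ v ∈ Q) (hsep : ∀ a ∈ P, ∀ b ∈ Q, ¬(UGraph A).Adj a b)
    (hP : P.ncard = k + 1) (hdeg : ∀ v, k ≤ {w | A v w}.ncard) :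
    ∀ a ∈ P, ∀ b ∈ P, a ≠ b → A a b := by
  intro a ha b hb hab
  have hout : {w | A a w} ⊆ P \ {a} := fun w haw =>
    ⟨(hPQ w).resolve_right (hsep a ha w · (adj_of_arc hirr haw)),
      fun hwa => hirr a (Set.mem_singleton_iff.mp hwa ▸ haw)⟩
  have hcard : (P \ {a}).ncard ≤ {w | A a w}.ncard := by
    rw [Set.ncard_sdiff_singleton_of_mem ha, hP]
    exact hdeg a
  exact (Set.eq_of_subset_of_ncard_le hout hcard).superset ⟨hb, Ne.symm hab⟩

end UGraph

theorem stmt_7_general {V : Type*} [Fintype V] (A : V → V → Prop) (hirr : ∀ v, ¬ A v v)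
    (M : (UGraph A).Subgraph) (hM : M.IsMatching)
    (hmax : ∀ M' : (UGraph A).Subgraph, M'.IsMatching →
      M'.edgeSet.ncard ≤ M.edgeSet.ncard)
    (m : ℕ) (hm : M.edgeSet.ncard = m)
    (x x' : V) (hxx : x ≠ x') (hX : M.vertsᶜ = ({x, x'} : Set V))
    (hdel : ∀ v : V, m ≤ {w | A v w}.ncard ∧ m ≤ {w | A w v}.ncard)
    (hMx : 2 * ({e ∈ M.edgeSet | ∃ y ∈ e, (UGraph A).Adj x y}).ncard = m) :
    ({w | ∃ e ∈ ({e ∈ M.edgeSet | ∃ y ∈ e, (UGraph A).Adj x y}), w ∈ e} ∪ {x}).ncard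
        = m + 1 ∧
    ({w | ∃ e ∈ (M.edgeSet \ {e ∈ M.edgeSet | ∃ y ∈ e, (UGraph A).Adj x y}), w ∈ e}
        ∪ {x'}).ncard = m + 1 ∧
    (∀ a ∈ ({w | ∃ e ∈ ({e ∈ M.edgeSet | ∃ y ∈ e, (UGraph A).Adj x y}), w ∈ e} ∪ {x}),
      ∀ b ∈ ({w | ∃ e ∈ ({e ∈ M.edgeSet | ∃ y ∈ e, (UGraph A).Adj x y}), w ∈ e} ∪ {x}),
        a ≠ b → A a b) ∧
    (∀ a ∈ ({w | ∃ e ∈ (M.edgeSet \ {e ∈ M.edgeSet | ∃ y ∈ e, (UGraph A).Adj x y}),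
        w ∈ e} ∪ {x'}),
      ∀ b ∈ ({w | ∃ e ∈ (M.edgeSet \ {e ∈ M.edgeSet | ∃ y ∈ e, (UGraph A).Adj x y}),
        w ∈ e} ∪ {x'}), a ≠ b → A a b) ∧
    (∀ a ∈ ({w | ∃ e ∈ ({e ∈ M.edgeSet | ∃ y ∈ e, (UGraph A).Adj x y}), w ∈ e} ∪ {x}),
      ∀ b ∈ ({w | ∃ e ∈ (M.edgeSet \ {e ∈ M.edgeSet | ∃ y ∈ e, (UGraph A).Adj x y}),
        w ∈ e} ∪ {x'}), ¬ A a b ∧ ¬ A b a) := by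
  have hMmax : M.IsMaximumMatching := ⟨hM, hmax⟩
  have hx : x ∉ M.verts := by simp [← Set.mem_compl_iff, hX]
  have hx' : x' ∉ M.verts := by simp [← Set.mem_compl_iff, hX]
  have hMx_sub := M.edgesAdjTo_subset x
  have hverts := hM.verts_eq_verticesOf_union hMx_sub
  set Sx := SimpleGraph.verticesOf (M.edgesAdjTo x)
  set Sy := SimpleGraph.verticesOf (M.edgeSet \ M.edgesAdjTo x)
  have hSx : Sx.ncard = m := (hM.ncard_verticesOf hMx_sub).trans hMx
  have hSy : Sy.ncard = m := by
    rw [hM.ncard_verticesOf Set.sdiff_subset, Set.ncard_sdiff hMx_sub, hm]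
    change 2 * (M.edgesAdjTo x).ncard = m at hMx
    omega
  have hdeg : ∀ v, m ≤ ((UGraph A).neighborSet v).ncard := fun v =>
    (hdel v).1.trans (UGraph.ncard_le_ncard_neighborSet hirr v)
  have hsep := hMmax.not_adj_of_two_uncovered hx hx' hxx (hSx ▸ hdeg x) (hSy ▸ hdeg x')
  have hPQ := hM.mem_union_or_mem_union hMx_sub hX
  have hP : (Sx ∪ {x}).ncard = m + 1 := by
    rw [Set.union_singleton, Set.ncard_insert_of_notMem (fun h => hx (hverts ▸ Or.inl h)), hSx]
  have hQ : (Sy ∪ {x'}).ncard = m + 1 := by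
    rw [Set.union_singleton, Set.ncard_insert_of_notMem (fun h => hx' (hverts ▸ Or.inr h)), hSy]
  refine ⟨hP, hQ, UGraph.arc_of_mem_of_mem hirr hPQ hsep hP fun v => (hdel v).1,
    UGraph.arc_of_mem_of_mem hirr (fun v => (hPQ v).symm)
      (fun a ha b hb h => hsep b hb a ha h.symm) hQ fun v => (hdel v).1,
    fun a ha b hb => ⟨fun h => hsep a ha b hb (UGraph.adj_of_arc hirr h),
      fun h => hsep a ha b hb (UGraph.adj_of_arc hirr h).symm⟩⟩

/-- the two-uncovered-vertices case with `|M_x| = m/2`: the two halves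
induce complete digraphs `K*_{m+1}` with no arcs between them. -/
theorem stmt_7 {V : Type*} [Fintype V] (A : V → V → Prop) (hirr : ∀ v, ¬ A v v)
    (M : (UGraph A).Subgraph) (hM : M.IsMatching)
    (hmax : ∀ M' : (UGraph A).Subgraph, M'.IsMatching →
      M'.edgeSet.ncard ≤ M.edgeSet.ncard)
    (m : ℕ) (hm : M.edgeSet.ncard = m) (hpos : 0 < m)
    (x x' : V) (hxx : x ≠ x') (hX : M.vertsᶜ = ({x, x'} : Set V))
    (hdel : ∀ v : V, m ≤ {w | A v w}.ncard ∧ m ≤ {w | A w v}.ncard)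
    (hMx : 2 * ({e ∈ M.edgeSet | ∃ y ∈ e, (UGraph A).Adj x y}).ncard = m) :
    ({w | ∃ e ∈ ({e ∈ M.edgeSet | ∃ y ∈ e, (UGraph A).Adj x y}), w ∈ e} ∪ {x}).ncard
        = m + 1 ∧
    ({w | ∃ e ∈ (M.edgeSet \ {e ∈ M.edgeSet | ∃ y ∈ e, (UGraph A).Adj x y}), w ∈ e}
        ∪ {x'}).ncard = m + 1 ∧
    (∀ a ∈ ({w | ∃ e ∈ ({e ∈ M.edgeSet | ∃ y ∈ e, (UGraph A).Adj x y}), w ∈ e} ∪ {x}),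
      ∀ b ∈ ({w | ∃ e ∈ ({e ∈ M.edgeSet | ∃ y ∈ e, (UGraph A).Adj x y}), w ∈ e} ∪ {x}),
        a ≠ b → A a b) ∧
    (∀ a ∈ ({w | ∃ e ∈ (M.edgeSet \ {e ∈ M.edgeSet | ∃ y ∈ e, (UGraph A).Adj x y}),
        w ∈ e} ∪ {x'}),
      ∀ b ∈ ({w | ∃ e ∈ (M.edgeSet \ {e ∈ M.edgeSet | ∃ y ∈ e, (UGraph A).Adj x y}),
        w ∈ e} ∪ {x'}), a ≠ b → A a b) ∧
    (∀ a ∈ ({w | ∃ e ∈ ({e ∈ M.edgeSet | ∃ y ∈ e, (UGraph A).Adj x y}), w ∈ e} ∪ {x}),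
      ∀ b ∈ ({w | ∃ e ∈ (M.edgeSet \ {e ∈ M.edgeSet | ∃ y ∈ e, (UGraph A).Adj x y}),
        w ∈ e} ∪ {x'}), ¬ A a b ∧ ¬ A b a) :=
  stmt_7_general A hirr M hM hmax m hm x x' hxx hX hdel hMx
end
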